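/- arXiv:0911.4191 — 4 statements merged into one kernel-verified Lean document; each statement's English description precedes it below -/
import Mathlib

section
/- Let A be an integer bimatrix with blocks A₁, A₂. Let y = (y¹,...,yᵐ) be a full vector (each yⁱ ∈ ℤᵗ nonzero with A₂yⁱ = 0) in the Graver basis G(A⁽ᵐ⁾), and let x = (x¹,...,xⁿ) be an expansion of y, i.e., each yⁱ = Σⱼ x^{i,j} is a conformal sum of elements x^{i,j} ∈ G(A₂) and x is the concatenation of all x^{i,j}. Then x ∈ G(A⁽ⁿ⁾). -/
/-- The conformal partial order on integer vectors. -/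
def IsConformal {ι : Type*} (x y : ι → ℤ) : Prop :=
  ∀ i, x i * y i ≥ 0 ∧ |x i| ≤ |y i|

/-- The Graver basis of an integer matrix. -/
def Graver {κ ι : Type*} [Fintype ι] (A : Matrix κ ι ℤ) : Set (ι → ℤ) :=
  {x | x ≠ 0 ∧ A.mulVec x = 0 ∧
    ∀ y : ι → ℤ, y ≠ 0 → A.mulVec y = 0 → IsConformal y x → y = x}

/-- The n-fold product of the bimatrix with blocks `A1` and `A2`. -/
def nfold {r s t : ℕ} (A1 : Matrix (Fin r) (Fin t) ℤ)
    (A2 : Matrix (Fin s) (Fin t) ℤ) (n : ℕ) :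
    Matrix (Fin r ⊕ Fin n × Fin s) (Fin n × Fin t) ℤ :=
  Matrix.of fun i q =>
    match i with
    | Sum.inl a => A1 a q.2
    | Sum.inr p => if p.1 = q.1 then A2 p.2 q.2 else 0

/-! ### Auxiliary lemmas -/

lemma conf_nonneg {a b : ℤ} (h1 : 0 ≤ a * b) (h2 : |a| ≤ |b|) (hb : 0 ≤ b) :
    0 ≤ a ∧ a ≤ b := by
  rcases hb.eq_or_lt with h | h
  · have ha : a = 0 := abs_nonpos_iff.mp (by rwa [← h, abs_zero] at h2)
    constructor <;> omega
  · have ha : 0 ≤ a := by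
      by_contra hn
      push_neg at hn
      exact absurd h1 (not_le.mpr (mul_neg_of_neg_of_pos hn h))
    exact ⟨ha, by rwa [abs_of_nonneg ha, abs_of_nonneg hb] at h2⟩

lemma conf_nonpos {a b : ℤ} (h1 : 0 ≤ a * b) (h2 : |a| ≤ |b|) (hb : b ≤ 0) :
    b ≤ a ∧ a ≤ 0 := by
  have := conf_nonneg (a := -a) (b := -b) (by rwa [neg_mul_neg])
    (by rwa [abs_neg, abs_neg]) (by omega)
  omega

lemma nfold_mulVec_inl {r s t n : ℕ} (A1 : Matrix (Fin r) (Fin t) ℤ)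
    (A2 : Matrix (Fin s) (Fin t) ℤ) (v : Fin n × Fin t → ℤ) (a : Fin r) :
    (nfold A1 A2 n).mulVec v (Sum.inl a) = ∑ p : Fin n × Fin t, A1 a p.2 * v p := by
  simp [Matrix.mulVec, dotProduct, nfold]

lemma nfold_mulVec_inr {r s t n : ℕ} (A1 : Matrix (Fin r) (Fin t) ℤ)
    (A2 : Matrix (Fin s) (Fin t) ℤ) (v : Fin n × Fin t → ℤ) (k : Fin n) (b : Fin s) :
    (nfold A1 A2 n).mulVec v (Sum.inr (k, b)) = ∑ j, A2 b j * v (k, j) := by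
  simp only [Matrix.mulVec, dotProduct, nfold, Matrix.of_apply]
  rw [Fintype.sum_prod_type, Finset.sum_comm]
  simp [ite_mul, Finset.sum_ite_eq]

lemma key_inl {r s t m n : ℕ} (A1 : Matrix (Fin r) (Fin t) ℤ)
    (A2 : Matrix (Fin s) (Fin t) ℤ) (c : Fin n → Fin m)
    (v : Fin n × Fin t → ℤ) (w : Fin m × Fin t → ℤ)
    (hw : ∀ i j, w (i, j) = ∑ k ∈ Finset.univ.filter (fun k => c k = i), v (k, j))
    (a : Fin r) :
    (nfold A1 A2 m).mulVec w (Sum.inl a) = (nfold A1 A2 n).mulVec v (Sum.inl a) := by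
  rw [nfold_mulVec_inl, nfold_mulVec_inl, Fintype.sum_prod_type, Fintype.sum_prod_type]
  rw [← Finset.sum_fiberwise Finset.univ c (fun k => ∑ j, A1 a j * v (k, j))]
  refine Finset.sum_congr rfl fun i _ => ?_
  rw [Finset.sum_comm]
  refine Finset.sum_congr rfl fun j _ => ?_
  rw [hw i j, Finset.mul_sum]

lemma key_inr {r s t m n : ℕ} (A1 : Matrix (Fin r) (Fin t) ℤ)
    (A2 : Matrix (Fin s) (Fin t) ℤ) (c : Fin n → Fin m)
    (v : Fin n × Fin t → ℤ) (w : Fin m × Fin t → ℤ)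
    (hw : ∀ i j, w (i, j) = ∑ k ∈ Finset.univ.filter (fun k => c k = i), v (k, j))
    (i : Fin m) (b : Fin s) :
    (nfold A1 A2 m).mulVec w (Sum.inr (i, b)) =
      ∑ k ∈ Finset.univ.filter (fun k => c k = i),
        (nfold A1 A2 n).mulVec v (Sum.inr (k, b)) := by
  simp only [nfold_mulVec_inr]
  rw [Finset.sum_comm]
  refine Finset.sum_congr rfl fun j _ => ?_
  rw [hw i j, Finset.mul_sum]

/-- Expansion lemma: if a full vector y is in the Graver basis of the m-fold
product, then any expansion x of y (obtained by conformally decomposing each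
brick of y into Graver basis elements of A2 and concatenating) is in the
Graver basis of the n-fold product. -/
theorem expansion_in_graver (r s t m n : ℕ)
    (A1 : Matrix (Fin r) (Fin t) ℤ) (A2 : Matrix (Fin s) (Fin t) ℤ)
    (y : Fin m × Fin t → ℤ) (hy : y ∈ Graver (nfold A1 A2 m))
    (hfull : ∀ i : Fin m, (fun j => y (i, j)) ≠ 0)
    (x : Fin n × Fin t → ℤ) (c : Fin n → Fin m) (hc : Monotone c)
    (hsum : ∀ (i : Fin m) (j : Fin t),
      y (i, j) = ∑ k ∈ Finset.univ.filter (fun k => c k = i), x (k, j))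
    (hxg : ∀ k : Fin n, (fun j => x (k, j)) ∈ Graver A2)
    (hconf : ∀ k : Fin n,
      IsConformal (fun j => x (k, j)) (fun j => y (c k, j))) :
    x ∈ Graver (nfold A1 A2 n) := by
  obtain ⟨hy0, hyk, hymin⟩ := hy
  -- pointwise sign facts for x vs y
  have hxy_pos : ∀ (k : Fin n) (j : Fin t), 0 ≤ y (c k, j) →
      0 ≤ x (k, j) ∧ x (k, j) ≤ y (c k, j) :=
    fun k j h => conf_nonneg (hconf k j).1 (hconf k j).2 h
  have hxy_neg : ∀ (k : Fin n) (j : Fin t), y (c k, j) ≤ 0 →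
      y (c k, j) ≤ x (k, j) ∧ x (k, j) ≤ 0 :=
    fun k j h => conf_nonpos (hconf k j).1 (hconf k j).2 h
  -- x ≠ 0
  have hn0 : n ≠ 0 := by
    intro h
    subst h
    apply hy0
    funext p
    have := hsum p.1 p.2
    simpa using this
  have hx0 : x ≠ 0 := by
    intro h
    apply (hxg ⟨0, Nat.pos_of_ne_zero hn0⟩).1
    funext j
    simp [h]
  refine ⟨hx0, ?_, ?_⟩
  -- x is in the kernel
  · funext i
    cases i with
    | inl a =>
      have h := key_inl A1 A2 c x y hsum a
      rw [Pi.zero_apply, ← h, hyk]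
      rfl
    | inr p =>
      obtain ⟨k, b⟩ := p
      rw [nfold_mulVec_inr, Pi.zero_apply]
      have h2 := congrFun (hxg k).2.1 b
      simpa [Matrix.mulVec, dotProduct] using h2
  -- minimality
  · intro z hz0 hzk hzc
    set w : Fin m × Fin t → ℤ :=
      fun p => ∑ k ∈ Finset.univ.filter (fun k => c k = p.1), z (k, p.2) with hwdef
    have hw : ∀ i j, w (i, j) = ∑ k ∈ Finset.univ.filter (fun k => c k = i), z (k, j) :=
      fun i j => rfl
    -- pointwise sign facts for z vs x
    have hzx_pos : ∀ (k : Fin n) (j : Fin t), 0 ≤ x (k, j) →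
        0 ≤ z (k, j) ∧ z (k, j) ≤ x (k, j) :=
      fun k j h => conf_nonneg (hzc (k, j)).1 (hzc (k, j)).2 h
    have hzx_neg : ∀ (k : Fin n) (j : Fin t), x (k, j) ≤ 0 →
        x (k, j) ≤ z (k, j) ∧ z (k, j) ≤ 0 :=
      fun k j h => conf_nonpos (hzc (k, j)).1 (hzc (k, j)).2 h
    -- w is conformal to y
    have hconf_wy : IsConformal w y := by
      rintro ⟨i, j⟩
      rcases le_total 0 (y (i, j)) with h | h
      · have hb : ∀ k ∈ Finset.univ.filter (fun k => c k = i),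
            0 ≤ z (k, j) ∧ z (k, j) ≤ x (k, j) := by
          intro k hk
          have hck : c k = i := (Finset.mem_filter.mp hk).2
          exact hzx_pos k j (hxy_pos k j (by rwa [hck])).1
        have h1 : 0 ≤ w (i, j) := Finset.sum_nonneg fun k hk => (hb k hk).1
        have h2 : w (i, j) ≤ y (i, j) := by
          rw [hw i j, hsum i j]
          exact Finset.sum_le_sum fun k hk => (hb k hk).2
        exact ⟨mul_nonneg h1 h, by rw [abs_of_nonneg h1, abs_of_nonneg h]; exact h2⟩
      · have hb : ∀ k ∈ Finset.univ.filter (fun k => c k = i),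
            x (k, j) ≤ z (k, j) ∧ z (k, j) ≤ 0 := by
          intro k hk
          have hck : c k = i := (Finset.mem_filter.mp hk).2
          exact hzx_neg k j (hxy_neg k j (by rwa [hck])).2
        have h1 : w (i, j) ≤ 0 := Finset.sum_nonpos fun k hk => (hb k hk).2
        have h2 : y (i, j) ≤ w (i, j) := by
          rw [hw i j, hsum i j]
          exact Finset.sum_le_sum fun k hk => (hb k hk).1
        refine ⟨?_, by rw [abs_of_nonpos h1, abs_of_nonpos h]; omega⟩
        have hnn : 0 ≤ -w (i, j) * -y (i, j) := mul_nonneg (by omega) (by omega)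
        rw [neg_mul_neg] at hnn
        exact hnn
    -- w ≠ 0
    have hw0 : w ≠ 0 := by
      intro hW
      apply hz0
      funext p
      obtain ⟨k, j⟩ := p
      have hWc : ∑ k' ∈ Finset.univ.filter (fun k' => c k' = c k), z (k', j) = 0 := by
        have := congrFun hW (c k, j)
        simpa [hw] using this
      have hmem : k ∈ Finset.univ.filter (fun k' => c k' = c k) := by
        simp
      rcases le_total 0 (y (c k, j)) with h | h
      · have hnn : ∀ k' ∈ Finset.univ.filter (fun k' => c k' = c k), 0 ≤ z (k', j) := by
          intro k' hk'
          have hck : c k' = c k := (Finset.mem_filter.mp hk').2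
          exact (hzx_pos k' j (hxy_pos k' j (by rwa [hck])).1).1
        exact (Finset.sum_eq_zero_iff_of_nonneg hnn).mp hWc k hmem
      · have hnp : ∀ k' ∈ Finset.univ.filter (fun k' => c k' = c k), z (k', j) ≤ 0 := by
          intro k' hk'
          have hck : c k' = c k := (Finset.mem_filter.mp hk').2
          exact (hzx_neg k' j (hxy_neg k' j (by rwa [hck])).2).2
        exact (Finset.sum_eq_zero_iff_of_nonpos hnp).mp hWc k hmem
    -- w is in the kernel of the m-fold product
    have hwk : (nfold A1 A2 m).mulVec w = 0 := by
      funext i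
      cases i with
      | inl a =>
        rw [key_inl A1 A2 c z w hw a, hzk]
        rfl
      | inr p =>
        obtain ⟨i, b⟩ := p
        rw [key_inr A1 A2 c z w hw i b, Pi.zero_apply]
        refine Finset.sum_eq_zero fun k _ => ?_
        rw [hzk]
        rfl
    -- by minimality of y, w = y
    have hwy : w = y := hymin w hw0 hwk hconf_wy
    -- conclude z = x
    funext p
    obtain ⟨k, j⟩ := p
    have hsz : ∑ k' ∈ Finset.univ.filter (fun k' => c k' = c k),
        (x (k', j) - z (k', j)) = 0 := by
      rw [Finset.sum_sub_distrib, ← hsum (c k) j, ← hw (c k) j, hwy]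
      omega
    have hmem : k ∈ Finset.univ.filter (fun k' => c k' = c k) := by
      simp
    rcases le_total 0 (y (c k, j)) with h | h
    · have hnn : ∀ k' ∈ Finset.univ.filter (fun k' => c k' = c k),
          0 ≤ x (k', j) - z (k', j) := by
        intro k' hk'
        have hck : c k' = c k := (Finset.mem_filter.mp hk').2
        have := hzx_pos k' j (hxy_pos k' j (by rwa [hck])).1
        omega
      have := (Finset.sum_eq_zero_iff_of_nonneg hnn).mp hsz k hmem
      omega
    · have hnp : ∀ k' ∈ Finset.univ.filter (fun k' => c k' = c k),
          x (k', j) - z (k', j) ≤ 0 := by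
        intro k' hk'
        have hck : c k' = c k := (Finset.mem_filter.mp hk').2
        have := hzx_neg k' j (hxy_neg k' j (by rwa [hck])).2
        omega
      have := (Finset.sum_eq_zero_iff_of_nonpos hnp).mp hsz k hmem
      omega
end

section
/- For every integer (r,s)×t bimatrix A, the Graver complexity g(A) := sup{type(x) : x ∈ G(A⁽ⁿ⁾), n ∈ ℕ} is finite, where type(x) is the number of nonzero bricks xᵏ ∈ ℤᵗ of x = (x¹,...,xⁿ). -/
open Function Matrix

section Conformal

variable {ι : Type*}

def orthant (z : ι → ℤ) : AddSubmonoid (ι → ℤ) where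
  carrier := {a | ∀ i, (0 ≤ z i → 0 ≤ a i) ∧ (z i ≤ 0 → a i ≤ 0)}
  add_mem' ha hb i := by
    have := ha i; have := hb i
    simp only [Pi.add_apply]; omega
  zero_mem' _ := by simp

theorem mem_orthant {z a : ι → ℤ} :
    a ∈ orthant z ↔ ∀ i, (0 ≤ z i → 0 ≤ a i) ∧ (z i ≤ 0 → a i ≤ 0) :=
  Iff.rfl

theorem zsmul_mem_orthant {z a : ι → ℤ} {m : ℤ} (hm : 0 ≤ m) (ha : a ∈ orthant z) :
    m • a ∈ orthant z := by
  lift m to ℕ using hm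
  rw [natCast_zsmul]
  exact AddSubmonoid.nsmul_mem _ ha m

theorem orthant_le_orthant {y z : ι → ℤ} (hy : y ∈ orthant z) : orthant y ≤ orthant z :=
  fun a ha i => by have := ha i; have := hy i; omega

theorem eq_zero_of_mem_orthant_of_neg_mem {z a : ι → ℤ} (ha : a ∈ orthant z)
    (ha' : -a ∈ orthant z) : a = 0 :=
  funext fun i => by
    have := ha i; have := ha' i
    simp only [Pi.neg_apply, Pi.zero_apply] at this ⊢
    omega

theorem eq_zero_of_sum_eq_zero_of_mem_orthant {S : Type*} [Fintype S] {z : ι → ℤ}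
    {f : S → ι → ℤ} (hf : ∀ g, f g ∈ orthant z) (hsum : ∑ g, f g = 0) (g : S) : f g = 0 := by
  classical
  refine eq_zero_of_mem_orthant_of_neg_mem (hf g) ?_
  have : -f g = ∑ g' ∈ Finset.univ.erase g, f g' := by
    rw [neg_eq_iff_add_eq_zero, add_comm, Finset.sum_erase_add _ _ (Finset.mem_univ g), hsum]
  rw [this]
  exact AddSubmonoid.sum_mem _ fun g' _ => hf g'

theorem int_mul_nonneg_and_abs_le_iff (a b : ℤ) :
    (0 ≤ a * b ∧ |a| ≤ |b|) ↔ (0 ≤ b → 0 ≤ a ∧ a ≤ b) ∧ (b ≤ 0 → b ≤ a ∧ a ≤ 0) := by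
  rw [mul_nonneg_iff, Int.abs_eq_natAbs, Int.abs_eq_natAbs, Nat.cast_le]
  omega

theorem isConformal_iff_mem_orthant {a z : ι → ℤ} :
    IsConformal a z ↔ a ∈ orthant z ∧ z - a ∈ orthant z := by
  simp only [IsConformal, ge_iff_le, int_mul_nonneg_and_abs_le_iff, mem_orthant, Pi.sub_apply,
    ← forall_and]
  exact forall_congr' fun i => by omega

theorem IsConformal.mem_orthant {a z : ι → ℤ} (h : IsConformal a z) : a ∈ orthant z :=
  (isConformal_iff_mem_orthant.1 h).1

theorem IsConformal.sub_left {a z : ι → ℤ} (h : IsConformal a z) : IsConformal (z - a) z := by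
  rw [isConformal_iff_mem_orthant] at h ⊢
  simpa [and_comm] using h

theorem isConformal_refl (z : ι → ℤ) : IsConformal z z :=
  fun _ => ⟨mul_self_nonneg _, le_rfl⟩

theorem IsConformal.nonneg_and_le {a z : ι → ℤ} (hz : 0 ≤ z) (h : IsConformal a z) :
    0 ≤ a ∧ a ≤ z := by
  rw [isConformal_iff_mem_orthant] at h
  refine ⟨fun i => (h.1 i).1 (hz i), fun i => ?_⟩
  have := (h.2 i).1 (hz i)
  simp only [Pi.sub_apply] at this ⊢
  omega

def signParts (x : ι → ℤ) : ι ⊕ ι → ℕ :=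
  Sum.elim (fun i => (x i).toNat) (fun i => (-x i).toNat)

theorem isConformal_iff_signParts_le {a z : ι → ℤ} :
    IsConformal a z ↔ signParts a ≤ signParts z := by
  simp only [IsConformal, ge_iff_le, int_mul_nonneg_and_abs_le_iff, Pi.le_def, Sum.forall,
    signParts, Sum.elim_inl, Sum.elim_inr, ← forall_and]
  exact forall_congr' fun i => by omega

theorem signParts_injective : Injective (signParts (ι := ι)) := fun x y h =>
  funext fun i => by
    have h1 := congrFun h (Sum.inl i); have h2 := congrFun h (Sum.inr i)
    simp only [signParts, Sum.elim_inl, Sum.elim_inr] at h1 h2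
    omega

theorem wellFounded_isConformal_ne [Finite ι] :
    WellFounded fun a z : ι → ℤ => IsConformal a z ∧ a ≠ z :=
  Subrelation.wf
    (fun h => lt_of_le_of_ne (isConformal_iff_signParts_le.1 h.1) (signParts_injective.ne h.2))
    (InvImage.wf signParts wellFounded_lt)

end Conformal

section GraverBasis

variable {κ ι : Type*} [Fintype ι]

theorem graver_finite (A : Matrix κ ι ℤ) : (Graver A).Finite := by
  refine Set.Finite.of_finite_image ?_ signParts_injective.injOn
  refine IsAntichain.finite_of_partiallyWellOrderedOn (r := (· ≤ ·)) ?_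
    (Set.isPWO_of_wellQuasiOrderedLE _)
  rintro _ ⟨a, ha, rfl⟩ _ ⟨b, hb, rfl⟩ hne hle
  exact hne (congrArg signParts (hb.2.2 a ha.1 ha.2.1 (isConformal_iff_signParts_le.2 hle)))

/-- The matrix `G₂` of the paper, with the elements of `Graver A` as columns. -/
def graverMatrix (A : Matrix κ ι ℤ) : Matrix ι (Graver A) ℤ :=
  Matrix.of fun i g => (g : ι → ℤ) i

theorem mul_graverMatrix (A : Matrix κ ι ℤ) : A * graverMatrix A = 0 := by
  ext a g
  simpa [graverMatrix, mul_apply, mulVec, dotProduct] using congrFun g.2.2.1 a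

theorem smul_mem_orthant_of_coeff {A : Matrix κ ι ℤ} {z : ι → ℤ} {e : Graver A → ℤ} (he : 0 ≤ e)
    (hez : ∀ g, e g ≠ 0 → (g : ι → ℤ) ∈ orthant z) (g : Graver A) :
    e g • (g : ι → ℤ) ∈ orthant z := by
  by_cases hg : e g = 0
  · simp [hg]
  · exact zsmul_mem_orthant (he g) (hez g hg)

variable (A : Matrix κ ι ℤ) [Fintype (Graver A)]

theorem graverMatrix_mulVec (e : Graver A → ℤ) :
    graverMatrix A *ᵥ e = ∑ g, e g • (g : ι → ℤ) := by
  ext i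
  simp [graverMatrix, mulVec, dotProduct, Finset.sum_apply, mul_comm]

variable {A}

theorem graverMatrix_mulVec_mem_orthant {z : ι → ℤ} {e : Graver A → ℤ} (he : 0 ≤ e)
    (hez : ∀ g, e g ≠ 0 → (g : ι → ℤ) ∈ orthant z) : graverMatrix A *ᵥ e ∈ orthant z := by
  rw [graverMatrix_mulVec]
  exact AddSubmonoid.sum_mem _ fun g _ => smul_mem_orthant_of_coeff he hez g

/-- Nonzero vectors in a common orthant span a pointed cone. -/
theorem eq_zero_of_graverMatrix_mulVec_eq_zero {z : ι → ℤ} {e : Graver A → ℤ} (he : 0 ≤ e)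
    (hez : ∀ g, e g ≠ 0 → (g : ι → ℤ) ∈ orthant z) (h : graverMatrix A *ᵥ e = 0) : e = 0 := by
  rw [graverMatrix_mulVec] at h
  funext g
  have := eq_zero_of_sum_eq_zero_of_mem_orthant (smul_mem_orthant_of_coeff he hez) h g
  exact (smul_eq_zero.1 this).resolve_right g.2.1

theorem exists_graver_decomposition {z : ι → ℤ} (hz : A *ᵥ z = 0) :
    ∃ e : Graver A → ℤ, 0 ≤ e ∧ (∀ g, e g ≠ 0 → (g : ι → ℤ) ∈ orthant z) ∧
      graverMatrix A *ᵥ e = z := by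
  classical
  induction z using (wellFounded_isConformal_ne (ι := ι)).induction with
  | h z ih =>
  by_cases hz0 : z = 0
  · exact ⟨0, le_rfl, by simp, by simp [hz0]⟩
  by_cases hzG : z ∈ Graver A
  · refine ⟨Pi.single ⟨z, hzG⟩ 1, Pi.single_nonneg.2 zero_le_one, fun g hg => ?_, ?_⟩
    · rw [Pi.single_apply, ite_ne_right_iff] at hg
      rw [hg.1]
      exact (isConformal_refl z).mem_orthant
    · rw [graverMatrix_mulVec]
      simp [Pi.single_apply]
  obtain ⟨y, hy0, hyA, hyz, hyne⟩ : ∃ y, y ≠ 0 ∧ A *ᵥ y = 0 ∧ IsConformal y z ∧ y ≠ z := by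
    simpa [Graver, hz0, hz] using hzG
  obtain ⟨e₁, he₁, he₁z, rfl⟩ := ih y ⟨hyz, hyne⟩ hyA
  obtain ⟨e₂, he₂, he₂z, he₂sum⟩ := ih (z - graverMatrix A *ᵥ e₁)
    ⟨hyz.sub_left, by simpa using hy0⟩ (by rw [mulVec_sub, hz, hyA, sub_zero])
  refine ⟨e₁ + e₂, add_nonneg he₁ he₂, fun g hg => ?_,
    by rw [mulVec_add, he₂sum, add_sub_cancel]⟩
  rcases ne_or_eq (e₁ g) 0 with h | h
  · exact orthant_le_orthant hyz.mem_orthant (he₁z g h)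
  · exact orthant_le_orthant hyz.sub_left.mem_orthant (he₂z g (by simpa [h] using hg))

end GraverBasis

theorem Finset.exists_le_sum_eq_of_le_sum {K α : Type*} [AddCommGroup α] [Lattice α]
    [IsOrderedAddMonoid α] (s : Finset K) {c : K → α} (hc : ∀ k, 0 ≤ c k) {w : α} (hw₀ : 0 ≤ w)
    (hw : w ≤ ∑ k ∈ s, c k) : ∃ d : K → α, (∀ k, 0 ≤ d k ∧ d k ≤ c k) ∧ ∑ k ∈ s, d k = w := by
  classical
  induction s using Finset.induction_on generalizing w with
  | empty => exact ⟨0, fun k => ⟨le_rfl, hc k⟩, by simpa using le_antisymm hw₀ hw⟩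
  | insert a s ha ih =>
    rw [Finset.sum_insert ha] at hw
    -- Take as much as possible from `c a`, and distribute the rest over `s`.
    obtain ⟨d, hd, hds⟩ := ih (w := w - w ⊓ c a) (sub_nonneg.2 inf_le_left) <| by
      rw [sub_inf, sub_self]
      exact sup_le (sum_nonneg fun k _ => hc k) (sub_le_iff_le_add'.2 hw)
    refine ⟨update d a (w ⊓ c a), fun k => ?_, ?_⟩
    · rcases eq_or_ne k a with rfl | hk
      · exact update_self k _ d ▸ ⟨le_inf hw₀ (hc k), inf_le_right⟩
      · simpa [hk] using hd k
    · rw [Finset.sum_insert ha, Finset.sum_update_of_notMem ha, hds, update_self,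
        add_sub_cancel]

section NFold

variable {r s t n : ℕ} (A1 : Matrix (Fin r) (Fin t) ℤ) (A2 : Matrix (Fin s) (Fin t) ℤ)

theorem nfold_mulVec_eq_zero_iff (y : Fin n × Fin t → ℤ) :
    nfold A1 A2 n *ᵥ y = 0 ↔ ∑ k, A1 *ᵥ curry y k = 0 ∧ ∀ k, A2 *ᵥ curry y k = 0 := by
  have hinl : ∀ a, (nfold A1 A2 n *ᵥ y) (Sum.inl a) = (∑ k, A1 *ᵥ curry y k) a := by
    intro a
    simp [mulVec, dotProduct, nfold, Fintype.sum_prod_type, Finset.sum_apply]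
  have hinr : ∀ k i, (nfold A1 A2 n *ᵥ y) (Sum.inr (k, i)) = (A2 *ᵥ curry y k) i := by
    intro k i
    simp [mulVec, dotProduct, nfold, Fintype.sum_prod_type, ite_mul]
  simp only [funext_iff, Sum.forall, Prod.forall, hinl, hinr, Pi.zero_apply]

theorem nfold_mulVec_uncurry_eq_zero_iff [Fintype (Graver A2)] (d : Fin n → Graver A2 → ℤ) :
    nfold A1 A2 n *ᵥ uncurry (fun k => graverMatrix A2 *ᵥ d k) = 0 ↔
      (A1 * graverMatrix A2) *ᵥ ∑ k, d k = 0 := by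
  simp [nfold_mulVec_eq_zero_iff, mulVec_mulVec, mul_graverMatrix, mulVec_sum]

end NFold

theorem card_filter_ne_zero_le_sum {K S : Type*} [Fintype K] [Fintype S] {c : K → S → ℤ}
    (hc : ∀ k, 0 ≤ c k) :
    ((Finset.univ.filter fun k => c k ≠ 0).card : ℤ) ≤ ∑ g, ∑ k, c k g := by
  rw [Finset.sum_comm, Finset.card_filter, Nat.cast_sum]
  refine Finset.sum_le_sum fun k _ => ?_
  split_ifs with hk
  · obtain ⟨g, hg⟩ := Function.ne_iff.1 hk
    have := hc k g
    calc ((1 : ℕ) : ℤ) ≤ c k g := by simp only [Pi.zero_apply] at hg this; omega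
      _ ≤ ∑ g, c k g := Finset.single_le_sum (fun g _ => hc k g) (Finset.mem_univ g)
  · exact_mod_cast Finset.sum_nonneg fun g _ => hc k g

theorem ncard_nonzero_bricks_le {t n : ℕ} {S : Type*} [Fintype S] (G : Matrix (Fin t) S ℤ)
    {x : Fin n × Fin t → ℤ} {c : Fin n → S → ℤ} (hc : ∀ k, 0 ≤ c k)
    (hcx : ∀ k, G *ᵥ c k = curry x k) :
    {k | ∃ j, x (k, j) ≠ 0}.ncard ≤ (∑ g, (∑ k, c k) g).toNat := by
  have hsub : {k | ∃ j, x (k, j) ≠ 0} ⊆ Finset.univ.filter fun k => c k ≠ 0 := by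
    rintro k ⟨j, hj⟩
    simp only [Finset.coe_filter, Finset.mem_univ, true_and]
    rintro hk
    exact hj (by simpa [hk] using (congrFun (hcx k) j).symm)
  calc {k | ∃ j, x (k, j) ≠ 0}.ncard ≤ (Finset.univ.filter fun k => c k ≠ 0).card := by
        rw [← Set.ncard_coe_finset]
        exact Set.ncard_le_ncard hsub (Finset.finite_toSet _)
    _ ≤ (∑ g, (∑ k, c k) g).toNat := by
        simp only [Finset.sum_apply]
        have hsum : 0 ≤ ∑ g, ∑ k, c k g :=
          Finset.sum_nonneg fun g _ => Finset.sum_nonneg fun k _ => hc k g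
        exact (Int.le_toNat hsum).2 (card_filter_ne_zero_le_sum hc)

section Reduction

variable {r s t n : ℕ} {A1 : Matrix (Fin r) (Fin t) ℤ} {A2 : Matrix (Fin s) (Fin t) ℤ}
  [Fintype (Graver A2)] {x : Fin n × Fin t → ℤ} {c : Fin n → Graver A2 → ℤ}

theorem sum_mem_graver_mul_graverMatrix (hx : x ∈ Graver (nfold A1 A2 n)) (hc : ∀ k, 0 ≤ c k)
    (hcz : ∀ k g, c k g ≠ 0 → (g : Fin t → ℤ) ∈ orthant (curry x k))
    (hcx : ∀ k, graverMatrix A2 *ᵥ c k = curry x k) :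
    ∑ k, c k ∈ Graver (A1 * graverMatrix A2) := by
  set G := graverMatrix A2
  have hxc : uncurry (fun k => G *ᵥ c k) = x := by simp [hcx, uncurry_curry]
  have horth : ∀ k (e : Graver A2 → ℤ), 0 ≤ e → e ≤ c k →
      ∀ g, e g ≠ 0 → (g : Fin t → ℤ) ∈ orthant (curry x k) := fun k e he hec g hg =>
    hcz k g fun hcg => hg (le_antisymm (hcg ▸ hec g) (he g))
  refine ⟨fun h => hx.1 ?_, (nfold_mulVec_uncurry_eq_zero_iff A1 A2 c).1 (hxc ▸ hx.2.1), ?_⟩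
  · rw [Finset.sum_eq_zero_iff_of_nonneg fun k _ => hc k] at h
    ext ⟨k, j⟩
    simp [← hxc, h]
  intro w hw0 hwker hwv
  obtain ⟨hw₀, hwle⟩ := hwv.nonneg_and_le (Finset.sum_nonneg fun k _ => hc k)
  -- Distributing `w` over the bricks gives a kernel element `y ⊑ x`; minimality of `x` forces
  -- `y = x`, hence `w = ∑ k, c k`.
  obtain ⟨d, hd, hdw⟩ := Finset.univ.exists_le_sum_eq_of_le_sum hc hw₀ hwle
  have hdorth k := horth k (d k) (hd k).1 (hd k).2
  have hcdorth k := horth k (c k - d k) (sub_nonneg.2 (hd k).2) (sub_le_self _ (hd k).1)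
  set y := uncurry fun k => G *ᵥ d k
  have hy0 : y ≠ 0 := fun hy => hw0 <| hdw ▸ Finset.sum_eq_zero fun k _ =>
    eq_zero_of_graverMatrix_mulVec_eq_zero (hd k).1 (hdorth k) <|
      funext fun j => by simpa [y] using congrFun hy (k, j)
  have hdx : ∀ k, IsConformal (G *ᵥ d k) (curry x k) := fun k => by
    refine isConformal_iff_mem_orthant.2 ⟨?_, ?_⟩
    · exact graverMatrix_mulVec_mem_orthant (hd k).1 (hdorth k)
    · rw [← congrArg (· - G *ᵥ d k) (hcx k), ← mulVec_sub]
      exact graverMatrix_mulVec_mem_orthant (sub_nonneg.2 (hd k).2) (hcdorth k)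
  have hyx : y = x := hx.2.2 y hy0 ((nfold_mulVec_uncurry_eq_zero_iff A1 A2 d).2 (hdw ▸ hwker))
    fun q => hdx q.1 q.2
  have hcd : ∀ k, c k = d k := fun k => sub_eq_zero.1 <|
    eq_zero_of_graverMatrix_mulVec_eq_zero (sub_nonneg.2 (hd k).2) (hcdorth k) <| by
      rw [mulVec_sub, hcx, ← hyx]
      simp [y, G]
  simp [← hdw, hcd]

end Reduction

/-- The Graver complexity of every integer bimatrix is finite: there is a
uniform bound on the number of nonzero bricks (the type) of any element
of any Graver basis G(A⁽ⁿ⁾). -/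
theorem graver_complexity_finite (r s t : ℕ)
    (A1 : Matrix (Fin r) (Fin t) ℤ) (A2 : Matrix (Fin s) (Fin t) ℤ) :
    ∃ g : ℕ, ∀ (n : ℕ) (x : Fin n × Fin t → ℤ),
      x ∈ Graver (nfold A1 A2 n) →
      {k : Fin n | ∃ j, x (k, j) ≠ 0}.ncard ≤ g := by
  have := (graver_finite A2).fintype
  refine ⟨(graver_finite (A1 * graverMatrix A2)).toFinset.sup fun v => (∑ g, v g).toNat,
    fun n x hx => ?_⟩
  have hbrick k : A2 *ᵥ curry x k = 0 := ((nfold_mulVec_eq_zero_iff A1 A2 x).1 hx.2.1).2 k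
  choose c hc hcz hcx using fun k => exists_graver_decomposition (hbrick k)
  calc {k | ∃ j, x (k, j) ≠ 0}.ncard ≤ (∑ g, (∑ k, c k) g).toNat :=
        ncard_nonzero_bricks_le _ hc hcx
    _ ≤ _ := Finset.le_sup (f := fun v => (∑ g, v g).toNat)
        ((Set.Finite.mem_toFinset _).2 (sum_mem_graver_mul_graverMatrix hx hc hcz hcx))
end

section
/- Let A be an integer bimatrix with Graver complexity g = g(A), and let n > g. Then G(A⁽ⁿ⁾) is exactly the set of n-liftings of elements of G(A⁽ᵍ⁾): z ∈ G(A⁽ⁿ⁾) if and only if there is y = (y¹,...,yᵍ) ∈ G(A⁽ᵍ⁾) and indices 1 ≤ k₁ < ⋯ < k_g ≤ n such that z^{kᵢ} = yⁱ for all i and all other bricks of z are zero. -/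
section
variable {r s t g n : ℕ} {A1 : Matrix (Fin r) (Fin t) ℤ} {A2 : Matrix (Fin s) (Fin t) ℤ}

lemma sum_lift_aux {φ : Fin g → Fin n} (hφ : Function.Injective φ)
    (h : Fin n → ℤ) (h0 : ∀ k, (∀ i, φ i ≠ k) → h k = 0) :
    ∑ k, h k = ∑ i, h (φ i) := by
  rw [← Finset.sum_image (fun a _ b _ hab => hφ hab)]
  refine (Finset.sum_subset (Finset.subset_univ _) ?_).symm
  intro k _ hk
  refine h0 k fun i hi => hk ?_
  simp only [Finset.mem_image, Finset.mem_univ, true_and]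
  exact ⟨i, hi⟩

lemma mulVec_inl (x : Fin n × Fin t → ℤ) (a : Fin r) :
    (nfold A1 A2 n).mulVec x (Sum.inl a) = ∑ k, ∑ j, A1 a j * x (k, j) := by
  simp [Matrix.mulVec, dotProduct, nfold, Fintype.sum_prod_type]

lemma mulVec_inr (x : Fin n × Fin t → ℤ) (k : Fin n) (b : Fin s) :
    (nfold A1 A2 n).mulVec x (Sum.inr (k, b)) = ∑ j, A2 b j * x (k, j) := by
  simp [Matrix.mulVec, dotProduct, nfold, Fintype.sum_prod_type, ite_mul,
    Finset.sum_ite_eq]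

lemma mulVec_lift {φ : Fin g → Fin n} (hφ : Function.Injective φ)
    {z : Fin n × Fin t → ℤ} {y : Fin g × Fin t → ℤ}
    (hzy : ∀ i j, z (φ i, j) = y (i, j))
    (hz0 : ∀ k, (∀ i, φ i ≠ k) → ∀ j, z (k, j) = 0) :
    (nfold A1 A2 n).mulVec z = 0 ↔ (nfold A1 A2 g).mulVec y = 0 := by
  have hinl : ∀ a : Fin r, (nfold A1 A2 n).mulVec z (Sum.inl a)
      = (nfold A1 A2 g).mulVec y (Sum.inl a) := by
    intro a
    rw [mulVec_inl, mulVec_inl,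
      sum_lift_aux hφ _ (fun k hk => Finset.sum_eq_zero fun j _ => by
        rw [hz0 k hk j, mul_zero])]
    exact Finset.sum_congr rfl fun i _ => Finset.sum_congr rfl fun j _ => by
      rw [hzy i j]
  have hinr : ∀ (i : Fin g) (b : Fin s), (nfold A1 A2 n).mulVec z (Sum.inr (φ i, b))
      = (nfold A1 A2 g).mulVec y (Sum.inr (i, b)) := by
    intro i b
    rw [mulVec_inr, mulVec_inr]
    exact Finset.sum_congr rfl fun j _ => by rw [hzy i j]
  constructor
  · intro hZ
    funext q
    rcases q with a | ⟨i, b⟩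
    · rw [← hinl a, hZ]; rfl
    · rw [← hinr i b, hZ]; rfl
  · intro hY
    funext q
    rcases q with a | ⟨k, b⟩
    · rw [hinl a, hY]; rfl
    · by_cases hk : ∃ i, φ i = k
      · obtain ⟨i, rfl⟩ := hk
        rw [hinr i b, hY]; rfl
      · push_neg at hk
        rw [mulVec_inr]
        simp only [Pi.zero_apply]
        exact Finset.sum_eq_zero fun j _ => by rw [hz0 k hk j, mul_zero]

lemma zero_lift {φ : Fin g → Fin n}
    {z : Fin n × Fin t → ℤ} {y : Fin g × Fin t → ℤ}
    (hzy : ∀ i j, z (φ i, j) = y (i, j))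
    (hz0 : ∀ k, (∀ i, φ i ≠ k) → ∀ j, z (k, j) = 0) :
    z = 0 ↔ y = 0 := by
  constructor
  · intro hz; funext p
    rw [← hzy p.1 p.2, hz]; rfl
  · intro hy; funext p
    by_cases hk : ∃ i, φ i = p.1
    · obtain ⟨i, hi⟩ := hk
      have := hzy i p.2
      rw [hi, hy] at this
      simpa using this
    · push_neg at hk
      exact hz0 p.1 hk p.2

lemma graver_lift {φ : Fin g → Fin n} (hφ : Function.Injective φ)
    {z : Fin n × Fin t → ℤ} {y : Fin g × Fin t → ℤ}
    (hzy : ∀ i j, z (φ i, j) = y (i, j))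
    (hz0 : ∀ k, (∀ i, φ i ≠ k) → ∀ j, z (k, j) = 0) :
    z ∈ Graver (nfold A1 A2 n) ↔ y ∈ Graver (nfold A1 A2 g) := by
  constructor
  · rintro ⟨hz_ne, hz_ker, hz_min⟩
    refine ⟨fun h => hz_ne ((zero_lift hzy hz0).mpr h),
      (mulVec_lift hφ hzy hz0).mp hz_ker, ?_⟩
    intro w hw_ne hw_ker hw_conf
    -- lift w to the n-fold level
    classical
    set w' : Fin n × Fin t → ℤ := fun p =>
      if h : ∃ i, φ i = p.1 then w (h.choose, p.2) else 0 with hw'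
    have hw'y : ∀ i j, w' (φ i, j) = w (i, j) := by
      intro i j
      have hex : ∃ i', φ i' = φ i := ⟨i, rfl⟩
      simp only [hw', dif_pos hex]
      congr 1
      exact congrArg (·, j) (hφ hex.choose_spec)
    have hw'0 : ∀ k, (∀ i, φ i ≠ k) → ∀ j, w' (k, j) = 0 := by
      intro k hk j
      simp only [hw']
      rw [dif_neg]
      push_neg
      exact hk
    have hw'_ker : (nfold A1 A2 n).mulVec w' = 0 :=
      (mulVec_lift hφ hw'y hw'0).mpr hw_ker
    have hw'_ne : w' ≠ 0 := fun h => hw_ne ((zero_lift hw'y hw'0).mp h)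
    have hw'_conf : IsConformal w' z := by
      rintro ⟨k, j⟩
      by_cases hk : ∃ i, φ i = k
      · obtain ⟨i, rfl⟩ := hk
        rw [hw'y i j, hzy i j]
        exact hw_conf (i, j)
      · push_neg at hk
        rw [hw'0 k hk j, hz0 k hk j]
        simp
    have : w' = z := hz_min w' hw'_ne hw'_ker hw'_conf
    funext p
    rw [← hzy p.1 p.2, ← this, hw'y p.1 p.2]
  · rintro ⟨hy_ne, hy_ker, hy_min⟩
    refine ⟨fun h => hy_ne ((zero_lift hzy hz0).mp h),
      (mulVec_lift hφ hzy hz0).mpr hy_ker, ?_⟩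
    intro w hw_ne hw_ker hw_conf
    have hw0 : ∀ k, (∀ i, φ i ≠ k) → ∀ j, w (k, j) = 0 := by
      intro k hk j
      have := (hw_conf (k, j)).2
      rw [hz0 k hk j] at this
      simpa using this
    set v : Fin g × Fin t → ℤ := fun p => w (φ p.1, p.2) with hv
    have hwv : ∀ i j, w (φ i, j) = v (i, j) := fun i j => rfl
    have hv_ker : (nfold A1 A2 g).mulVec v = 0 :=
      (mulVec_lift hφ hwv hw0).mp hw_ker
    have hv_ne : v ≠ 0 := fun h => hw_ne ((zero_lift hwv hw0).mpr h)
    have hv_conf : IsConformal v y := by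
      rintro ⟨i, j⟩
      have := hw_conf (φ i, j)
      rwa [hzy i j] at this
    have hvy : v = y := hy_min v hv_ne hv_ker hv_conf
    funext p
    by_cases hk : ∃ i, φ i = p.1
    · obtain ⟨i, hi⟩ := hk
      obtain ⟨k, j⟩ := p
      subst hi
      rw [hwv i j, hvy, ← hzy i j]
    · push_neg at hk
      rw [hw0 p.1 hk p.2, hz0 p.1 hk p.2]

end

/-- If g bounds the type of every Graver basis element of every n-fold
product (i.e., g is the Graver complexity), then for n > g the Graver basis
of the n-fold product is exactly the set of n-liftings of elements of the
Graver basis of the g-fold product. -/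
theorem graver_nfold_liftings (r s t : ℕ)
    (A1 : Matrix (Fin r) (Fin t) ℤ) (A2 : Matrix (Fin s) (Fin t) ℤ)
    (g : ℕ)
    (hg : ∀ (n : ℕ) (x : Fin n × Fin t → ℤ),
      x ∈ Graver (nfold A1 A2 n) → {k : Fin n | ∃ j, x (k, j) ≠ 0}.ncard ≤ g)
    (n : ℕ) (hn : g < n) (z : Fin n × Fin t → ℤ) :
    z ∈ Graver (nfold A1 A2 n) ↔
      ∃ y ∈ Graver (nfold A1 A2 g), ∃ φ : Fin g → Fin n, StrictMono φ ∧
        (∀ i j, z (φ i, j) = y (i, j)) ∧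
        (∀ k : Fin n, (∀ i, φ i ≠ k) → ∀ j, z (k, j) = 0) := by
  classical
  constructor
  · intro hz
    set S : Finset (Fin n) := Finset.univ.filter (fun k => ∃ j, z (k, j) ≠ 0) with hS
    have hScard : S.card ≤ g := by
      have hcoe : (↑S : Set (Fin n)) = {k : Fin n | ∃ j, z (k, j) ≠ 0} := by
        ext k; simp [hS]
      have := hg n z hz
      rwa [← hcoe, Set.ncard_coe_finset] at this
    obtain ⟨T, hST, hT⟩ := Finset.exists_superset_card_eq hScard
      (by simpa using hn.le)
    set e := T.orderIsoOfFin hT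
    set φ : Fin g → Fin n := fun i => (e i : Fin n) with hφdef
    have hmono : StrictMono φ := fun a b hab => e.strictMono hab
    have hz0 : ∀ k : Fin n, (∀ i, φ i ≠ k) → ∀ j, z (k, j) = 0 := by
      intro k hk j
      have hkT : k ∉ T := by
        intro hkT
        exact hk (e.symm ⟨k, hkT⟩) (by simp [hφdef, e.apply_symm_apply])
      have hkS : k ∉ S := fun h => hkT (hST h)
      simp only [hS, Finset.mem_filter, Finset.mem_univ, true_and, not_exists,
        not_not] at hkS
      exact hkS j
    refine ⟨fun p => z (φ p.1, p.2), ?_, φ, hmono, fun i j => rfl, hz0⟩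
    exact (graver_lift hmono.injective (fun i j => rfl) hz0).mp hz
  · rintro ⟨y, hy, φ, hmono, hzy, hz0⟩
    exact (graver_lift hmono.injective hzy hz0).mpr hy
end

section
/- For every fixed integer bimatrix A with Graver complexity g = g(A), the cardinality of the Graver basis of the n-fold product satisfies |G(A⁽ⁿ⁾)| ≤ C(n, g) · |G(A⁽ᵍ⁾)| for all n ≥ g, where C(n,g) is the binomial coefficient; in particular |G(A⁽ⁿ⁾)| = O(n^g). -/
/-!
Padding by zero along an embedding `e : Fin m ↪ Fin n` of brick indices is compatible with the
`n`-fold structure: `A⁽ⁿ⁾` restricted to the rows and columns of the chosen bricks is `A⁽ᵐ⁾`,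
and its other rows vanish on those columns. Since padding also preserves and reflects
conformality, it maps `G(A⁽ᵐ⁾)` into `G(A⁽ⁿ⁾)`, and an element of `G(A⁽ⁿ⁾)` supported on the
bricks of `e` restricts to an element of `G(A⁽ᵐ⁾)`. Every element of `G(A⁽ⁿ⁾)` has at most `g`
nonzero bricks, hence is the lifting of an element of `G(A⁽ᵍ⁾)` along the increasing embedding
onto one of the `C(n, g)` sets of `g` bricks. If `G(A⁽ᵍ⁾)` is infinite, lifting embeds it in
`G(A⁽ⁿ⁾)`, so both sides of the bound are the junk value `0` of `Set.ncard`.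
-/

open Function Matrix

section Conformal

variable {ι κ : Type*}

lemma IsConformal.eq_zero {z x : ι → ℤ} (h : IsConformal z x) {i : ι} (hx : x i = 0) :
    z i = 0 := by
  simpa [hx] using (h i).2

lemma IsConformal.comp {z x : κ → ℤ} (h : IsConformal z x) (f : ι → κ) :
    IsConformal (z ∘ f) (x ∘ f) :=
  fun i => h (f i)

lemma IsConformal.extend {f : ι → κ} (hf : Injective f) {w y : ι → ℤ} (h : IsConformal w y) :
    IsConformal (extend f w 0) (extend f y 0) := by
  intro k
  by_cases hk : ∃ i, f i = k
  · obtain ⟨i, rfl⟩ := hk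
    simpa only [hf.extend_apply] using h i
  · simp [extend_apply' _ _ _ hk]

end Conformal

lemma Function.Injective.extend_comp_eq_self {ι κ γ : Type*} [Zero γ] {f : ι → κ}
    (hf : Injective f) {x : κ → γ} (hx : ∀ k ∉ Set.range f, x k = 0) :
    extend f (x ∘ f) 0 = x := by
  funext k
  by_cases hk : ∃ i, f i = k
  · obtain ⟨i, rfl⟩ := hk
    exact hf.extend_apply _ _ _
  · exact (extend_apply' _ _ _ hk).trans (hx k hk).symm

lemma Function.Injective.extend_zero_eq_zero_iff {ι κ γ : Type*} [Zero γ] {f : ι → κ}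
    (hf : Injective f) {y : ι → γ} : extend f y 0 = 0 ↔ y = 0 := by
  refine ⟨fun h => ?_, fun h => h ▸ extend_const f 0⟩
  rw [← Function.extend_comp hf y 0, h]
  rfl

section MulVec

variable {R κ₁ κ₂ ι₁ ι₂ : Type*} [Semiring R] [Fintype ι₁] [Fintype ι₂]

lemma Matrix.mulVec_extend_zero (M : Matrix κ₁ ι₁ R) {f : ι₂ → ι₁} (hf : Injective f)
    (y : ι₂ → R) : M *ᵥ extend f y 0 = M.submatrix id f *ᵥ y := by
  funext r
  refine (Fintype.sum_of_injective f hf _ _ (fun k hk => ?_) (fun i => ?_)).symm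
  · simp [extend_apply' _ _ _ (by simpa using hk)]
  · simp [hf.extend_apply]

lemma Matrix.mulVec_extend_zero_eq_zero_iff (M : Matrix κ₁ ι₁ R) {f : ι₂ → ι₁}
    (hf : Injective f) {g : κ₂ → κ₁} (hrows : ∀ r ∉ Set.range g, ∀ j, M r (f j) = 0) (y : ι₂ → R) :
    M *ᵥ extend f y 0 = 0 ↔ M.submatrix g f *ᵥ y = 0 := by
  have hsub : M.submatrix g f *ᵥ y = (M.submatrix id f *ᵥ y) ∘ g := rfl
  rw [M.mulVec_extend_zero hf, hsub]
  refine ⟨fun h => by rw [h]; rfl, fun h => funext fun r => ?_⟩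
  by_cases hr : r ∈ Set.range g
  · obtain ⟨k, rfl⟩ := hr
    exact congrFun h k
  · simp [Matrix.mulVec, dotProduct, hrows r hr]

end MulVec

section Graver

variable {κ₁ κ₂ ι₁ ι₂ : Type*} [Fintype ι₁] [Fintype ι₂] {M : Matrix κ₁ ι₁ ℤ}
  {N : Matrix κ₂ ι₂ ℤ} {f : ι₂ → ι₁}

lemma extend_mem_graver (hf : Injective f) (hker : ∀ y, M *ᵥ extend f y 0 = 0 ↔ N *ᵥ y = 0)
    {y : ι₂ → ℤ} (hy : y ∈ Graver N) : extend f y 0 ∈ Graver M := by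
  obtain ⟨hy0, hyN, hymin⟩ := hy
  refine ⟨hf.extend_zero_eq_zero_iff.not.2 hy0, (hker y).2 hyN, fun z hz0 hzM hzy => ?_⟩
  have hz : extend f (z ∘ f) 0 = z :=
    hf.extend_comp_eq_self fun k hk => hzy.eq_zero (extend_apply' _ _ _ (by simpa using hk))
  rw [← hz] at hz0 hzM ⊢
  have hzf : IsConformal (z ∘ f) y := by simpa only [extend_comp hf] using hzy.comp f
  rw [hymin (z ∘ f) (hf.extend_zero_eq_zero_iff.not.1 hz0) ((hker _).1 hzM) hzf]

lemma comp_mem_graver (hf : Injective f) (hker : ∀ y, M *ᵥ extend f y 0 = 0 ↔ N *ᵥ y = 0)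
    {x : ι₁ → ℤ} (hx : x ∈ Graver M) (hsupp : ∀ k ∉ Set.range f, x k = 0) :
    x ∘ f ∈ Graver N := by
  obtain ⟨hx0, hxM, hxmin⟩ := hx
  have hxf : extend f (x ∘ f) 0 = x := hf.extend_comp_eq_self hsupp
  refine ⟨fun h => hx0 ?_, (hker _).1 (by rwa [hxf]), fun w hw0 hwN hwx => ?_⟩
  · rw [← hxf, h, hf.extend_zero_eq_zero_iff]
  have hwx' : IsConformal (extend f w 0) x := hxf ▸ hwx.extend hf
  rw [← hxmin _ (hf.extend_zero_eq_zero_iff.not.2 hw0) ((hker w).2 hwN) hwx', extend_comp hf]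

end Graver

section NFold

variable {r s t m n : ℕ} (A1 : Matrix (Fin r) (Fin t) ℤ) (A2 : Matrix (Fin s) (Fin t) ℤ)

/-- The `n`-lifting of `y` along `e`: brick `i` of `y` becomes brick `e i`. -/
noncomputable def liftBricks (e : Fin m ↪ Fin n) (y : Fin m × Fin t → ℤ) :
    Fin n × Fin t → ℤ :=
  extend (Prod.map e id) y 0

lemma nfold_submatrix (e : Fin m ↪ Fin n) :
    (nfold A1 A2 n).submatrix (Sum.map id (Prod.map e id)) (Prod.map e id) = nfold A1 A2 m := by
  ext (a | ⟨i, b⟩) ⟨j, c⟩ <;> simp [nfold]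

lemma nfold_mulVec_liftBricks_eq_zero_iff (e : Fin m ↪ Fin n) (y : Fin m × Fin t → ℤ) :
    nfold A1 A2 n *ᵥ liftBricks e y = 0 ↔ nfold A1 A2 m *ᵥ y = 0 := by
  rw [liftBricks, (nfold A1 A2 n).mulVec_extend_zero_eq_zero_iff (e.injective.prodMap injective_id)
    (g := Sum.map id (Prod.map e id)), nfold_submatrix]
  rintro (a | ⟨k, b⟩) hr ⟨j, c⟩
  · exact absurd ⟨.inl a, rfl⟩ hr
  · have : k ≠ e j := fun h => hr ⟨.inr (j, b), by simp [h]⟩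
    simp [nfold, this]

lemma liftBricks_mem_graver (e : Fin m ↪ Fin n) {y : Fin m × Fin t → ℤ}
    (hy : y ∈ Graver (nfold A1 A2 m)) : liftBricks e y ∈ Graver (nfold A1 A2 n) :=
  extend_mem_graver (e.injective.prodMap injective_id)
    (nfold_mulVec_liftBricks_eq_zero_iff A1 A2 e) hy

lemma graver_nfold_infinite_of_le (hmn : m ≤ n) (h : (Graver (nfold A1 A2 m)).Infinite) :
    (Graver (nfold A1 A2 n)).Infinite :=
  Set.infinite_of_injOn_mapsTo
    (extend_injective ((Fin.castLEEmb hmn).injective.prodMap injective_id) _).injOn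
    (fun _ hy => liftBricks_mem_graver A1 A2 (Fin.castLEEmb hmn) hy) h

lemma graver_nfold_subset_image2_liftBricks {g : ℕ}
    (hg : ∀ x ∈ Graver (nfold A1 A2 n), {k : Fin n | ∃ j, x (k, j) ≠ 0}.ncard ≤ g) (hn : g ≤ n) :
    Graver (nfold A1 A2 n) ⊆ Set.image2
      (fun T : {T : Finset (Fin n) // T.card = g} => liftBricks (T.1.orderEmbOfFin T.2).toEmbedding)
      Set.univ (Graver (nfold A1 A2 g)) := by
  classical
  intro x hx
  obtain ⟨T, hST, hT⟩ := Finset.exists_superset_card_eq (n := g)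
    (s := {k : Fin n | ∃ j, x (k, j) ≠ 0}.toFinset)
    (by rw [← Set.ncard_eq_toFinset_card']; exact hg x hx) (by simpa using hn)
  set e := (T.orderEmbOfFin hT).toEmbedding
  have hf : Injective (Prod.map e (id : Fin t → Fin t)) := e.injective.prodMap injective_id
  have hsupp : ∀ p ∉ Set.range (Prod.map e id), x p = 0 := by
    rintro ⟨k, j⟩ hp
    by_contra hxkj
    have hk : k ∈ Set.range e := by
      rw [RelEmbedding.coe_toEmbedding, Finset.range_orderEmbOfFin]
      exact hST (by simpa using ⟨j, hxkj⟩)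
    obtain ⟨i, rfl⟩ := hk
    exact hp ⟨(i, j), rfl⟩
  exact ⟨⟨T, hT⟩, trivial, x ∘ Prod.map e id,
    comp_mem_graver hf (nfold_mulVec_liftBricks_eq_zero_iff A1 A2 e) hx hsupp,
    hf.extend_comp_eq_self hsupp⟩

end NFold

/-- If g is the Graver complexity (bounding the type of all Graver basis
elements of all n-fold products), then the cardinality of the Graver basis
of the n-fold product is at most C(n,g)·|G(A⁽ᵍ⁾)| for all n ≥ g;
in particular it is O(n^g). -/
theorem graver_cardinality_bound (r s t : ℕ)
    (A1 : Matrix (Fin r) (Fin t) ℤ) (A2 : Matrix (Fin s) (Fin t) ℤ)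
    (g : ℕ)
    (hg : ∀ (n : ℕ) (x : Fin n × Fin t → ℤ),
      x ∈ Graver (nfold A1 A2 n) → {k : Fin n | ∃ j, x (k, j) ≠ 0}.ncard ≤ g)
    (n : ℕ) (hn : g ≤ n) :
    (Graver (nfold A1 A2 n)).ncard ≤
      Nat.choose n g * (Graver (nfold A1 A2 g)).ncard := by
  by_cases hfin : (Graver (nfold A1 A2 g)).Finite
  · calc (Graver (nfold A1 A2 n)).ncard
        ≤ (Set.image2 _ Set.univ (Graver (nfold A1 A2 g))).ncard :=
          Set.ncard_le_ncard (graver_nfold_subset_image2_liftBricks A1 A2 (hg n) hn)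
            (Set.finite_univ.image2 _ hfin)
      _ ≤ (Set.univ ×ˢ Graver (nfold A1 A2 g)).ncard := by
          rw [← Set.image_prod]
          exact Set.ncard_image_le (Set.finite_univ.prod hfin)
      _ = Nat.choose n g * (Graver (nfold A1 A2 g)).ncard := by
          rw [Set.ncard_prod, Set.ncard_univ, Nat.card_eq_fintype_card, Fintype.card_finset_len,
            Fintype.card_fin]
  · rw [(graver_nfold_infinite_of_le A1 A2 hn hfin).ncard]
    exact Nat.zero_le _
end
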